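/- In a pseudocomplemented poset satisfying both the ACC and the DCC, for all elements a,b: (Min U(a,b))* =₁ Max L(a*,b*), i.e., each of these sets is ≤₁-below the other. -/
import Mathlib


/-- The set of maximal elements of A. -/
def maxE {P : Type*} [PartialOrder P] (A : Set P) : Set P :=
  {x ∈ A | ∀ y ∈ A, x ≤ y → x = y}

/-- A ≤₁ B: every element of A lies below some element of B. -/
def le1 {P : Type*} [Preorder P] (A B : Set P) : Prop :=
  ∀ a ∈ A, ∃ b ∈ B, a ≤ b

/-- The set of minimal elements of A. -/
def minE {P : Type*} [PartialOrder P] (A : Set P) : Set P :=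
  {x ∈ A | ∀ y ∈ A, y ≤ x → x = y}

/-- A ≤₂ B: every element of B lies above some element of A. -/
def le2 {P : Type*} [Preorder P] (A B : Set P) : Prop :=
  ∀ b ∈ B, ∃ a ∈ A, a ≤ b

lemma exists_max_above {P : Type*} [PartialOrder P] [WellFoundedGT P] (S : Set P)
    {x : P} (hx : x ∈ S) : ∃ m ∈ maxE S, x ≤ m := by
  obtain ⟨m, ⟨hmS, hxm⟩, hmin⟩ :=
    (wellFounded_gt (α := P)).has_min {y ∈ S | x ≤ y} ⟨x, hx, le_refl x⟩
  refine ⟨m, ⟨hmS, fun y hy hle => ?_⟩, hxm⟩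
  by_contra hne
  exact hmin y ⟨hy, hxm.trans hle⟩ (lt_of_le_of_ne hle hne)

lemma exists_min_below {P : Type*} [PartialOrder P] [WellFoundedLT P] (S : Set P)
    {x : P} (hx : x ∈ S) : ∃ m ∈ minE S, m ≤ x := by
  obtain ⟨m, ⟨hmS, hxm⟩, hmin⟩ :=
    (wellFounded_lt (α := P)).has_min {y ∈ S | y ≤ x} ⟨x, hx, le_refl x⟩
  refine ⟨m, ⟨hmS, fun y hy hle => ?_⟩, hxm⟩
  by_contra hne
  exact hmin y ⟨hy, hle.trans hxm⟩ (lt_of_le_of_ne hle (fun h => hne h.symm))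

/-- Under ACC and DCC: (Min U(a,b))* =₁ Max L(a*,b*). -/
theorem stmt_15 {P : Type*} [PartialOrder P] [OrderBot P] (s : P → P)
    (hpc1 : ∀ x : P, lowerBounds {x, s x} = {⊥})
    (hpc2 : ∀ x y : P, lowerBounds {x, y} = {⊥} → y ≤ s x)
    [WellFoundedGT P] [WellFoundedLT P] (a b : P) :
    le1 (s '' minE (upperBounds {a, b})) (maxE (lowerBounds {s a, s b})) ∧
    le1 (maxE (lowerBounds {s a, s b})) (s '' minE (upperBounds {a, b})) := by
  -- key lemma: z ≤ s x → x ≤ s z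
  have key : ∀ x z : P, z ≤ s x → x ≤ s z := by
    intro x z hz
    apply hpc2
    apply Set.eq_singleton_iff_unique_mem.mpr
    constructor
    · intro w hw
      rcases hw with rfl | rfl
      · exact bot_le
      · exact bot_le
    · intro w hw
      have hw1 : w ≤ z := hw (Set.mem_insert z _)
      have hw2 : w ≤ x := hw (Set.mem_insert_of_mem _ rfl)
      have : w ∈ lowerBounds {x, s x} := by
        intro u hu
        rcases hu with rfl | rfl
        · exact hw2
        · exact hw1.trans hz
      rw [hpc1 x] at this
      exact this
  have anti : ∀ {x y : P}, x ≤ y → s y ≤ s x := by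
    intro x y hxy
    apply hpc2
    apply Set.eq_singleton_iff_unique_mem.mpr
    refine ⟨fun w hw => ?_, fun w hw => ?_⟩
    · rcases hw with rfl | rfl <;> exact bot_le
    · have hw1 : w ≤ x := hw (Set.mem_insert x _)
      have hw2 : w ≤ s y := hw (Set.mem_insert_of_mem _ rfl)
      have : w ∈ lowerBounds {y, s y} := by
        intro u hu
        rcases hu with rfl | rfl
        · exact hw1.trans hxy
        · exact hw2
      rw [hpc1 y] at this
      exact this
  constructor
  · rintro _ ⟨c, ⟨hcU, _⟩, rfl⟩
    have hsc : s c ∈ lowerBounds {s a, s b} := by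
      intro u hu
      have hac : a ≤ c := hcU (Set.mem_insert a _)
      have hbc : b ≤ c := hcU (Set.mem_insert_of_mem _ rfl)
      rcases hu with rfl | rfl
      · exact anti hac
      · exact anti hbc
    exact exists_max_above _ hsc
  · intro m hm
    have hma : m ≤ s a := hm.1 (Set.mem_insert _ _)
    have hmb : m ≤ s b := hm.1 (Set.mem_insert_of_mem _ rfl)
    have hsm : s m ∈ upperBounds {a, b} := by
      intro u hu
      rcases hu with h | h <;> subst h
      · exact key u m hma
      · exact key u m hmb
    obtain ⟨c, hc, hcsm⟩ := exists_min_below _ hsm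
    refine ⟨s c, ⟨c, hc, rfl⟩, ?_⟩
    exact key m c hcsm
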